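/- Let p > 1. For every ε > 0 there exists a constant c_ε > 0 depending only on ε and p such that for all δ ≥ 0, all a ≥ 0 and all s, t ≥ 0: s·φ_a'(t) + t·φ_a'(s) ≤ ε·φ_a(s) + c_ε·φ_a(t), where φ_a'(r) = (δ+a+r)^{p−2}·r. -/

import Mathlib

/-!
Write `f(r) = (b + r)^(p-2) r` with `b = δ + a` and `Φ(t) = ∫₀ᵗ f`. Since `b + c u` lies between
`b + u` and `c (b + u)`, we get `f(c u) ≤ max(c, c^(p-1)) f(u)` for every `c > 0`. With `c = 2`
and the monotonicity of `f` this gives `t f(t) ≤ 2 max(2, 2^(p-1)) Φ(t)`, because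
`Φ(t) ≥ (t/2) f(t/2)`. Fix a small `l > 0`. If `l s ≤ t`, both terms are at most a constant times
`t f(t)`, since `s ≤ t / l`. If `t < l s`, both are at most `max(l, l^(p-1)) s f(s)`, which is as
small a multiple of `Φ(s)` as we like.
-/

open Real Set MeasureTheory intervalIntegral

lemma Real.rpow_le_max_rpow_of_mem_uIcc {x y z : ℝ} (r : ℝ) (hx : 0 < x) (hy : 0 < y)
    (hz : z ∈ uIcc x y) : z ^ r ≤ max (x ^ r) (y ^ r) := by
  wlog hxy : x ≤ y generalizing x y
  · rw [max_comm]
    exact this hy hx (uIcc_comm x y ▸ hz) (le_of_not_ge hxy)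
  rw [uIcc_of_le hxy] at hz
  rcases le_total 0 r with hr | hr
  · exact le_max_of_le_right (rpow_le_rpow (hx.le.trans hz.1) hz.2 hr)
  · exact le_max_of_le_left (rpow_le_rpow_of_nonpos hx hz.1 hr)

lemma MonotoneOn.sub_mul_le_intervalIntegral {f : ℝ → ℝ} {x y : ℝ} (hxy : x ≤ y)
    (hf : MonotoneOn f (Icc x y)) : (y - x) * f x ≤ ∫ r in x..y, f r := by
  have hfi : IntervalIntegrable f volume x y :=
    (uIcc_of_le hxy ▸ hf).intervalIntegrable
  have := integral_mono_on hxy intervalIntegrable_const hfi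
    fun r hr => hf (left_mem_Icc.2 hxy) hr hr.1
  simpa [intervalIntegral.integral_const] using this

lemma Real.exists_pos_max_self_rpow_le {q η : ℝ} (hq : 0 < q) (hη : 0 < η) :
    ∃ l > 0, max l (l ^ q) ≤ η :=
  ⟨min η (η ^ q⁻¹), by positivity, max_le (min_le_left _ _)
    ((rpow_le_rpow (by positivity) (min_le_right _ _) hq.le).trans (rpow_inv_rpow hη.le hq.ne').le)⟩

/-- The derivative `φ_a'` of the shifted function, with shift `b = δ + a`. -/
noncomputable def phiDeriv (p b r : ℝ) : ℝ := (b + r) ^ (p - 2) * r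

namespace phiDeriv

variable {p b : ℝ}

lemma nonneg (hb : 0 ≤ b) {r : ℝ} (hr : 0 ≤ r) : 0 ≤ phiDeriv p b r :=
  mul_nonneg (rpow_nonneg (by linarith) _) hr

lemma eq_rpow_mul_div (hb : 0 ≤ b) {r : ℝ} (hr : 0 ≤ r) :
    phiDeriv p b r = (b + r) ^ (p - 1) * (r / (b + r)) := by
  rcases (add_nonneg hb hr).eq_or_lt with h | h
  · obtain rfl : r = 0 := by linarith
    simp [phiDeriv]
  · rw [phiDeriv, show p - 2 = p - 1 - 1 by ring, rpow_sub_one h.ne']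
    ring

lemma monotoneOn (hp : 1 ≤ p) (hb : 0 ≤ b) : MonotoneOn (phiDeriv p b) (Ici 0) := by
  have hpow : MonotoneOn (fun r => (b + r) ^ (p - 1)) (Ici 0) := fun x hx y _ hxy =>
    rpow_le_rpow (add_nonneg hb hx) (by linarith) (by linarith)
  have hfrac : MonotoneOn (fun r => r / (b + r)) (Ici 0) := by
    intro x hx y hy hxy
    rcases (show (0:ℝ) ≤ x from hx).eq_or_lt with rfl | hx
    · simp only [zero_div]
      exact div_nonneg hy (add_nonneg hb hy)
    · rw [div_le_div_iff₀ (by linarith) (by linarith)]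
      nlinarith
  intro x hx y hy hxy
  rw [eq_rpow_mul_div hb hx, eq_rpow_mul_div hb hy]
  exact hpow.mul hfrac (fun _ hr => rpow_nonneg (add_nonneg hb hr) _)
    (fun _ (hr : (0:ℝ) ≤ _) => div_nonneg hr (add_nonneg hb hr)) hx hy hxy

lemma intervalIntegrable (hp : 1 ≤ p) (hb : 0 ≤ b) {x y : ℝ} (hx : 0 ≤ x) (hxy : x ≤ y) :
    IntervalIntegrable (phiDeriv p b) volume x y :=
  ((monotoneOn hp hb).mono fun _ hr => hx.trans (uIcc_of_le hxy ▸ hr).1).intervalIntegrable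

lemma integral_nonneg (hb : 0 ≤ b) {t : ℝ} (ht : 0 ≤ t) :
    0 ≤ ∫ r in (0:ℝ)..t, phiDeriv p b r :=
  intervalIntegral.integral_nonneg ht fun _ hr => nonneg hb hr.1

lemma mul_le_max (hb : 0 ≤ b) {c u : ℝ} (hc : 0 < c) (hu : 0 ≤ u) :
    phiDeriv p b (c * u) ≤ max c (c ^ (p - 1)) * phiDeriv p b u := by
  rcases hu.eq_or_lt with rfl | hu
  · simp [phiDeriv]
  have hbu : 0 < b + u := by linarith
  have hmem : b + c * u ∈ uIcc (b + u) (c * (b + u)) := by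
    rcases le_total c 1 with hc1 | hc1
    · rw [uIcc_of_ge (by nlinarith)]
      constructor <;> nlinarith
    · rw [uIcc_of_le (by nlinarith)]
      constructor <;> nlinarith
  have hpow : (b + c * u) ^ (p - 2) ≤ max 1 (c ^ (p - 2)) * (b + u) ^ (p - 2) := by
    simpa [mul_rpow hc.le hbu.le, max_mul_of_nonneg _ _ (rpow_nonneg hbu.le _)] using
      rpow_le_max_rpow_of_mem_uIcc (p - 2) hbu (mul_pos hc hbu) hmem
  have hmax : max 1 (c ^ (p - 2)) * c = max c (c ^ (p - 1)) := by
    rw [max_mul_of_nonneg _ _ hc.le, one_mul, show p - 1 = p - 2 + 1 by ring,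
      rpow_add_one hc.ne']
  calc phiDeriv p b (c * u) = (b + c * u) ^ (p - 2) * c * u := by rw [phiDeriv, mul_assoc]
    _ ≤ max 1 (c ^ (p - 2)) * (b + u) ^ (p - 2) * c * u := by gcongr
    _ = max 1 (c ^ (p - 2)) * c * phiDeriv p b u := by rw [phiDeriv]; ring
    _ = max c (c ^ (p - 1)) * phiDeriv p b u := by rw [hmax]

lemma mul_self_le_integral (hp : 1 ≤ p) (hb : 0 ≤ b) {t : ℝ} (ht : 0 ≤ t) :
    t * phiDeriv p b t ≤ 2 * max 2 (2 ^ (p - 1)) * ∫ r in (0:ℝ)..t, phiDeriv p b r := by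
  have ht2 : 0 ≤ t / 2 := by linarith
  have hhalf : t / 2 * phiDeriv p b (t / 2) ≤ ∫ r in (0:ℝ)..t, phiDeriv p b r :=
    calc t / 2 * phiDeriv p b (t / 2) = (t - t / 2) * phiDeriv p b (t / 2) := by ring
      _ ≤ ∫ r in t / 2..t, phiDeriv p b r :=
        ((monotoneOn hp hb).mono fun r hr => ht2.trans hr.1).sub_mul_le_intervalIntegral
          (by linarith)
      _ ≤ ∫ r in (0:ℝ)..t, phiDeriv p b r :=
        integral_mono_interval ht2 (by linarith) le_rfl
          ((ae_restrict_iff' measurableSet_Ioc).2 (.of_forall fun _ hr => nonneg hb hr.1.le))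
          (intervalIntegrable hp hb le_rfl ht)
  have hdouble : phiDeriv p b t ≤ max 2 (2 ^ (p - 1)) * phiDeriv p b (t / 2) := by
    simpa [mul_div_cancel₀] using mul_le_max (p := p) hb two_pos ht2
  calc t * phiDeriv p b t ≤ t * (max 2 (2 ^ (p - 1)) * phiDeriv p b (t / 2)) := by gcongr
    _ = 2 * max 2 (2 ^ (p - 1)) * (t / 2 * phiDeriv p b (t / 2)) := by ring
    _ ≤ _ := by gcongr

lemma mul_add_mul_le_of_mul_le (hp : 1 ≤ p) (hb : 0 ≤ b) {l s t : ℝ} (hl : 0 < l)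
    (hs : 0 ≤ s) (ht : 0 ≤ t) (hlst : l * s ≤ t) :
    s * phiDeriv p b t + t * phiDeriv p b s ≤
      2 * max 2 (2 ^ (p - 1)) * (l⁻¹ + max l⁻¹ (l⁻¹ ^ (p - 1))) *
        ∫ r in (0:ℝ)..t, phiDeriv p b r := by
  have hst : s ≤ l⁻¹ * t := (le_inv_mul_iff₀ hl).2 hlst
  have hft := nonneg (p := p) hb ht
  have hfs : phiDeriv p b s ≤ max l⁻¹ (l⁻¹ ^ (p - 1)) * phiDeriv p b t :=
    (monotoneOn hp hb hs (mem_Ici.2 (by positivity)) hst).trans (mul_le_max hb (inv_pos.2 hl) ht)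
  calc s * phiDeriv p b t + t * phiDeriv p b s
      ≤ l⁻¹ * t * phiDeriv p b t + t * (max l⁻¹ (l⁻¹ ^ (p - 1)) * phiDeriv p b t) := by
        gcongr
    _ = (l⁻¹ + max l⁻¹ (l⁻¹ ^ (p - 1))) * (t * phiDeriv p b t) := by ring
    _ ≤ (l⁻¹ + max l⁻¹ (l⁻¹ ^ (p - 1))) *
          (2 * max 2 (2 ^ (p - 1)) * ∫ r in (0:ℝ)..t, phiDeriv p b r) := by
      gcongr ?_ * ?_
      exact mul_self_le_integral hp hb ht
    _ = _ := by ring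

lemma mul_add_mul_le_of_le_mul (hp : 1 ≤ p) (hb : 0 ≤ b) {l s t : ℝ} (hl : 0 < l)
    (hs : 0 ≤ s) (ht : 0 ≤ t) (htls : t ≤ l * s) :
    s * phiDeriv p b t + t * phiDeriv p b s ≤
      2 * max l (l ^ (p - 1)) * (2 * max 2 (2 ^ (p - 1))) *
        ∫ r in (0:ℝ)..s, phiDeriv p b r := by
  have hfs := nonneg (p := p) hb hs
  have hft : phiDeriv p b t ≤ max l (l ^ (p - 1)) * phiDeriv p b s :=
    (monotoneOn hp hb ht (mem_Ici.2 (by positivity)) htls).trans (mul_le_max hb hl hs)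
  calc s * phiDeriv p b t + t * phiDeriv p b s
      ≤ s * (max l (l ^ (p - 1)) * phiDeriv p b s) +
          max l (l ^ (p - 1)) * s * phiDeriv p b s := by
        gcongr
        exact htls.trans (mul_le_mul_of_nonneg_right (le_max_left _ _) hs)
    _ = 2 * max l (l ^ (p - 1)) * (s * phiDeriv p b s) := by ring
    _ ≤ 2 * max l (l ^ (p - 1)) *
          (2 * max 2 (2 ^ (p - 1)) * ∫ r in (0:ℝ)..s, phiDeriv p b r) := by
      gcongr ?_ * ?_
      exact mul_self_le_integral hp hb hs
    _ = _ := by ring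

end phiDeriv

open phiDeriv in
theorem stmt5 (p ε : ℝ) (hp : 1 < p) (hε : 0 < ε) :
    ∃ c : ℝ, 0 < c ∧
      ∀ δ : ℝ, 0 ≤ δ → ∀ a : ℝ, 0 ≤ a → ∀ s : ℝ, 0 ≤ s → ∀ t : ℝ, 0 ≤ t →
        s * ((δ + a + t) ^ (p - 2) * t) + t * ((δ + a + s) ^ (p - 2) * s)
          ≤ ε * (∫ r in (0:ℝ)..s, (δ + a + r) ^ (p - 2) * r)
            + c * ∫ r in (0:ℝ)..t, (δ + a + r) ^ (p - 2) * r := by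
  set K : ℝ := 2 * max 2 (2 ^ (p - 1))
  have hK : 0 < K := by positivity
  obtain ⟨l, hl, hlε⟩ :=
    exists_pos_max_self_rpow_le (sub_pos.2 hp) (by positivity : 0 < ε / (2 * K))
  have hsmall : 2 * max l (l ^ (p - 1)) * K ≤ ε := by
    rw [le_div_iff₀ (by positivity)] at hlε
    linarith
  set c := K * (l⁻¹ + max l⁻¹ (l⁻¹ ^ (p - 1)))
  have hc : 0 < c := by positivity
  refine ⟨c, hc, fun δ hδ a ha s hs t ht => ?_⟩
  have hb : 0 ≤ δ + a := add_nonneg hδ ha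
  change s * phiDeriv p (δ + a) t + t * phiDeriv p (δ + a) s ≤
    ε * (∫ r in (0:ℝ)..s, phiDeriv p (δ + a) r) + c * ∫ r in (0:ℝ)..t, phiDeriv p (δ + a) r
  have hΦs := integral_nonneg (p := p) hb hs
  have hΦt := integral_nonneg (p := p) hb ht
  rcases le_total (l * s) t with hlst | htls
  · linarith [mul_add_mul_le_of_mul_le hp.le hb hl hs ht hlst, mul_nonneg hε.le hΦs]
  · linarith [mul_add_mul_le_of_le_mul hp.le hb hl hs ht htls,
      mul_le_mul_of_nonneg_right hsmall hΦs, mul_nonneg hc.le hΦt]
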